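/- Let t, k, n be positive integers with t ≤ k ≤ n and n ≥ t+2, and let 𝓖 = A(n,k,t) = {G ∈ C([n],k) : |G ∩ [t+2]| ≥ t+1}. Then co2(𝓖) = ((t+2)·C(n−t−2, k−t−2) + C(n−t−2, k−t−3))·(n−k+1)² + 2(t+2)(t+1)·C(n−t−2, k−t−1). -/
import Mathlib


open Finset

/-- `[n] = {1, …, n}` as a finset of naturals. -/
def Iv (n : ℕ) : Finset ℕ := Finset.Icc 1 n

/-- The collection of `k`-element subsets of `[n]`. -/
def KSets (n k : ℕ) : Finset (Finset ℕ) := (Iv n).powersetCard k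

/-- Codegree of `E` in the family `F`: the number of members of `F` containing `E`. -/
def codeg (F : Finset (Finset ℕ)) (E : Finset ℕ) : ℕ :=
  (F.filter fun A => E ⊆ A).card

/-- Codegree squared sum of a `k`-uniform family on `[n]`. -/
def co2 (n k : ℕ) (F : Finset (Finset ℕ)) : ℕ :=
  ∑ E ∈ KSets n (k - 1), codeg F E ^ 2

/-- `t`-intersecting family. -/
def IntersectingT (t : ℕ) (F : Finset (Finset ℕ)) : Prop :=
  ∀ A ∈ F, ∀ B ∈ F, t ≤ (A ∩ B).card

/-- `ζ_u(F)`: the number of unordered pairs of distinct members of `F` meeting in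
exactly `u` elements. -/
def zeta (u : ℕ) (F : Finset (Finset ℕ)) : ℕ :=
  ((F.offDiag.filter fun p => (p.1 ∩ p.2).card = u).image
    fun p => ({p.1, p.2} : Finset (Finset ℕ))).card

/-- `ζ_{u,v}(𝓖,𝓗)`: the number of unordered pairs `{F,G}` with `F ∈ 𝓖`, `G ∈ 𝓗`,
`|F| = |G| = u+1`, `|F ∩ G| = u` and `v ∈ F ∩ G`. -/
def zeta2v (u v : ℕ) (G H : Finset (Finset ℕ)) : ℕ :=
  (((G ×ˢ H).filter fun p =>
      p.1.card = u + 1 ∧ p.2.card = u + 1 ∧ (p.1 ∩ p.2).card = u ∧ v ∈ p.1 ∩ p.2).image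
    fun p => ({p.1, p.2} : Finset (Finset ℕ))).card

/-- The Hilton–Milner type family `H(n,k,t)`. -/
def HM (n k t : ℕ) : Finset (Finset ℕ) :=
  ((KSets n k).filter fun F => Iv t ⊆ F ∧ (F ∩ Finset.Icc (t + 1) (k + 1)).Nonempty) ∪
    ((Iv t).image fun i => (Iv (k + 1)).erase i)

/-- The Frankl type family `A(n,k,t)`. -/
def AK (n k t : ℕ) : Finset (Finset ℕ) :=
  (KSets n k).filter fun F => t + 1 ≤ (F ∩ Iv (t + 2)).card

/-- Two families on `[n]` are isomorphic if one is the image of the other under a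
permutation of `[n]` applied elementwise to each member. -/
def Isom (n : ℕ) (F G : Finset (Finset ℕ)) : Prop :=
  ∃ σ : Equiv.Perm ℕ, (∀ x ∈ Iv n, σ x ∈ Iv n) ∧ G = F.image fun A => A.image σ

/-- The elementary shift `δ_{ij}` of a single set. -/
def shiftSet (i j : ℕ) (𝓐 : Finset (Finset ℕ)) (A : Finset ℕ) : Finset ℕ :=
  if j ∈ A ∧ i ∉ A ∧ insert i (A.erase j) ∉ 𝓐 then insert i (A.erase j) else A

/-- The shift operation `Δ_{ij}` on families. -/
def shiftFam (i j : ℕ) (𝓐 : Finset (Finset ℕ)) : Finset (Finset ℕ) :=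
  𝓐.image (shiftSet i j 𝓐)

/-- Left-compressed family. -/
def LeftCompressed (n : ℕ) (F : Finset (Finset ℕ)) : Prop :=
  ∀ i j : ℕ, 1 ≤ i → i < j → j ≤ n → shiftFam i j F = F

/-- `g` is a generating set of `F ⊆ C([n],k)`: its members are subsets of `[n]` of size at
most `k`, and `U(g) ∩ C([n],k) = F`. -/
def IsGenSet (n k : ℕ) (F g : Finset (Finset ℕ)) : Prop :=
  (∀ E ∈ g, E ⊆ Iv n ∧ E.card ≤ k) ∧
    (KSets n k).filter (fun A => ∃ E ∈ g, E ⊆ A) = F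

/-- `s⁺` of a collection of finsets: the maximum element appearing. -/
def sPlus (g : Finset (Finset ℕ)) : ℕ := g.sup fun E => E.sup id

/-- `g*_i`: the members of `g` of size `i` containing `s`. -/
def gStar (g : Finset (Finset ℕ)) (s i : ℕ) : Finset (Finset ℕ) :=
  g.filter fun E => s ∈ E ∧ E.card = i

/-- `𝒟(ℰ) = ∪_{E ∈ ℰ} {B ∈ C([n],k) : B ∩ [s⁺(E)] = E}`. -/
def Dcal (n k : ℕ) (ℰ : Finset (Finset ℕ)) : Finset (Finset ℕ) :=
  (KSets n k).filter fun B => ∃ E ∈ ℰ, B ∩ Iv (E.sup id) = E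

/-- The family of `k`-subsets of `[n]` generated by `g`. -/
def genFam (n k : ℕ) (g : Finset (Finset ℕ)) : Finset (Finset ℕ) :=
  (KSets n k).filter fun A => ∃ E ∈ g, E ⊆ A

/-- Integer binomial coefficient: `C(a,b) = 0` when `b < 0` or `b > a`. -/
def ichoose (a b : ℤ) : ℤ :=
  if 0 ≤ b ∧ b ≤ a then (a.toNat.choose b.toNat : ℤ) else 0

lemma card_Iv (n : ℕ) : (Iv n).card = n := by simp [Iv]

lemma codeg_AK (t k n : ℕ) (hk : 0 < k) (hkn : k ≤ n) (hn : t + 2 ≤ n)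
    (E : Finset ℕ) (hE : E ⊆ Iv n) (hEc : E.card = k - 1) :
    codeg (AK n k t) E =
      if t + 1 ≤ (E ∩ Iv (t + 2)).card then n - k + 1
      else if (E ∩ Iv (t + 2)).card = t then 2 else 0 := by
  have key : ((AK n k t).filter fun A => E ⊆ A).card
      = ((Iv n \ E).filter fun x => t + 1 ≤ ((insert x E) ∩ Iv (t + 2)).card).card := by
    symm
    apply Finset.card_bij (fun x _ => insert x E)
    · intro x hx
      simp only [Finset.mem_filter, Finset.mem_sdiff] at hx
      obtain ⟨⟨hxn, hxE⟩, hcond⟩ := hx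
      simp only [Finset.mem_filter, AK, KSets, Finset.mem_powersetCard]
      refine ⟨⟨⟨Finset.insert_subset hxn hE, ?_⟩, hcond⟩, Finset.subset_insert _ _⟩
      rw [Finset.card_insert_of_notMem hxE, hEc]; omega
    · intro x hx y hy hxy
      simp only [Finset.mem_filter, Finset.mem_sdiff] at hx hy
      have : x ∈ insert y E := hxy ▸ Finset.mem_insert_self x E
      rcases Finset.mem_insert.1 this with h | h
      · exact h
      · exact absurd h hx.1.2
    · intro A hA
      simp only [Finset.mem_filter, AK, KSets, Finset.mem_powersetCard] at hA
      obtain ⟨⟨⟨hAn, hAc⟩, hAint⟩, hEA⟩ := hA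
      have hcard : (A \ E).card = 1 := by
        rw [Finset.card_sdiff_of_subset hEA, hAc, hEc]; omega
      obtain ⟨x, hx⟩ := Finset.card_eq_one.1 hcard
      have hxA : x ∈ A := (Finset.mem_sdiff.1 (hx ▸ Finset.mem_singleton_self x)).1
      have hxE : x ∉ E := (Finset.mem_sdiff.1 (hx ▸ Finset.mem_singleton_self x)).2
      have hAeq : A = insert x E := by
        apply Finset.Subset.antisymm
        · intro y hy
          by_cases hyE : y ∈ E
          · exact Finset.mem_insert_of_mem hyE
          · have hmem : y ∈ A \ E := Finset.mem_sdiff.2 ⟨hy, hyE⟩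
            rw [hx, Finset.mem_singleton] at hmem
            exact hmem ▸ Finset.mem_insert_self y E
        · exact Finset.insert_subset hxA hEA
      refine ⟨x, ?_, hAeq.symm⟩
      simp only [Finset.mem_filter, Finset.mem_sdiff]
      exact ⟨⟨hAn hxA, hxE⟩, hAeq ▸ hAint⟩
  rw [codeg, key]
  by_cases h1 : t + 1 ≤ (E ∩ Iv (t + 2)).card
  · rw [if_pos h1, Finset.filter_true_of_mem, Finset.card_sdiff_of_subset hE, card_Iv, hEc]
    · omega
    · intro x _
      calc t + 1 ≤ (E ∩ Iv (t + 2)).card := h1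
        _ ≤ ((insert x E) ∩ Iv (t + 2)).card :=
            Finset.card_le_card (Finset.inter_subset_inter (Finset.subset_insert _ _) Finset.Subset.rfl)
  · rw [if_neg h1]
    by_cases h2 : (E ∩ Iv (t + 2)).card = t
    · rw [if_pos h2]
      have hfeq : ((Iv n \ E).filter fun x => t + 1 ≤ ((insert x E) ∩ Iv (t + 2)).card)
          = Iv (t + 2) \ E := by
        ext x
        simp only [Finset.mem_filter, Finset.mem_sdiff]
        constructor
        · rintro ⟨⟨hxn, hxE⟩, hc⟩
          refine ⟨?_, hxE⟩
          by_contra hxs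
          rw [Finset.insert_inter_of_notMem hxs] at hc
          omega
        · rintro ⟨hxs, hxE⟩
          have hxn : x ∈ Iv n := by
            simp only [Iv, Finset.mem_Icc] at hxs ⊢; omega
          refine ⟨⟨hxn, hxE⟩, ?_⟩
          rw [Finset.insert_inter_of_mem hxs,
            Finset.card_insert_of_notMem (fun h => hxE (Finset.mem_inter.1 h).1), h2]
      rw [hfeq]
      have h3 := Finset.card_sdiff_add_card_inter (Iv (t + 2)) E
      rw [Finset.inter_comm] at h3
      rw [card_Iv] at h3
      omega
    · rw [if_neg h2]
      rw [Finset.card_eq_zero]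
      apply Finset.filter_false_of_mem
      intro x _
      have hsub : (insert x E) ∩ Iv (t + 2) ⊆ insert x (E ∩ Iv (t + 2)) := by
        intro y hy
        rcases Finset.mem_inter.1 hy with ⟨hy1, hy2⟩
        rcases Finset.mem_insert.1 hy1 with h | h
        · exact h ▸ Finset.mem_insert_self _ _
        · exact Finset.mem_insert_of_mem (Finset.mem_inter.2 ⟨h, hy2⟩)
      have := Finset.card_le_card hsub
      have := Finset.card_insert_le x (E ∩ Iv (t + 2))
      omega

lemma count_inter (t k n j : ℕ) (hn : t + 2 ≤ n) (hjk : j ≤ k) :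
    ((KSets n k).filter fun E => (E ∩ Iv (t + 2)).card = j).card
      = (t + 2).choose j * (n - (t + 2)).choose (k - j) := by
  have hcard : ((Iv (t + 2)).powersetCard j ×ˢ (Finset.Icc (t + 3) n).powersetCard (k - j)).card
      = (t + 2).choose j * (n - (t + 2)).choose (k - j) := by
    rw [Finset.card_product, Finset.card_powersetCard, Finset.card_powersetCard, card_Iv,
      Nat.card_Icc]
    congr 2
    omega
  rw [← hcard]
  apply Finset.card_bij' (fun E _ => (E ∩ Iv (t + 2), E \ Iv (t + 2)))
    (fun p _ => p.1 ∪ p.2)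
  · intro E hE
    simp only [Finset.mem_filter, KSets, Finset.mem_powersetCard] at hE
    obtain ⟨⟨hEn, hEc⟩, hEj⟩ := hE
    simp only [Finset.mem_product, Finset.mem_powersetCard]
    refine ⟨⟨Finset.inter_subset_right, hEj⟩, ?_, ?_⟩
    · intro y hy
      rcases Finset.mem_sdiff.1 hy with ⟨hy1, hy2⟩
      have := hEn hy1
      simp only [Iv, Finset.mem_Icc] at this hy2 ⊢
      omega
    · have := Finset.card_inter_add_card_sdiff E (Iv (t + 2))
      omega
  · intro p hp
    simp only [Finset.mem_product, Finset.mem_powersetCard] at hp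
    obtain ⟨⟨hP, hPc⟩, hQ, hQc⟩ := hp
    have hdisj : Disjoint p.1 p.2 := by
      rw [Finset.disjoint_left]
      intro y hy1 hy2
      have := hP hy1; have := hQ hy2
      simp only [Iv, Finset.mem_Icc] at *
      omega
    simp only [Finset.mem_filter, KSets, Finset.mem_powersetCard]
    have hint : (p.1 ∪ p.2) ∩ Iv (t + 2) = p.1 := by
      ext y
      simp only [Finset.mem_inter, Finset.mem_union]
      constructor
      · rintro ⟨h1 | h1, h2⟩
        · exact h1
        · exfalso; have := hQ h1
          simp only [Iv, Finset.mem_Icc] at this h2; omega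
      · intro h; exact ⟨Or.inl h, hP h⟩
    refine ⟨⟨?_, ?_⟩, ?_⟩
    · intro y hy
      rcases Finset.mem_union.1 hy with h | h
      · have := hP h; simp only [Iv, Finset.mem_Icc] at this ⊢; omega
      · have := hQ h; simp only [Iv, Finset.mem_Icc] at this ⊢; omega
    · rw [Finset.card_union_of_disjoint hdisj, hPc, hQc]; omega
    · rw [hint, hPc]
  · intro E hE
    simp only
    ext y
    simp only [Finset.mem_union, Finset.mem_inter, Finset.mem_sdiff]
    tauto
  · intro p hp
    simp only [Finset.mem_product, Finset.mem_powersetCard] at hp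
    obtain ⟨⟨hP, hPc⟩, hQ, hQc⟩ := hp
    have hint : (p.1 ∪ p.2) ∩ Iv (t + 2) = p.1 := by
      ext y
      simp only [Finset.mem_inter, Finset.mem_union]
      constructor
      · rintro ⟨h1 | h1, h2⟩
        · exact h1
        · exfalso; have := hQ h1
          simp only [Iv, Finset.mem_Icc] at this h2; omega
      · intro h; exact ⟨Or.inl h, hP h⟩
    have hsd : (p.1 ∪ p.2) \ Iv (t + 2) = p.2 := by
      ext y
      simp only [Finset.mem_sdiff, Finset.mem_union]
      constructor
      · rintro ⟨h1 | h1, h2⟩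
        · exact absurd (hP h1) h2
        · exact h1
      · intro h
        refine ⟨Or.inr h, fun hc => ?_⟩
        have := hQ h
        simp only [Iv, Finset.mem_Icc] at this hc; omega
    rw [hint, hsd]


lemma mem_KSets {n k : ℕ} {A : Finset ℕ} : A ∈ KSets n k ↔ A ⊆ Iv n ∧ A.card = k :=
  Finset.mem_powersetCard

lemma ichoose_neg {a b : ℤ} (h : b < 0) : ichoose a b = 0 := by
  rw [ichoose, if_neg]; rintro ⟨h1, -⟩; omega

lemma ichoose_natCast (m j : ℕ) : ichoose (m : ℤ) (j : ℤ) = (m.choose j : ℤ) := by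
  rw [ichoose]
  split_ifs with h
  · simp
  · have hab : m < j := by omega
    rw [Nat.choose_eq_zero_of_lt hab]; simp

lemma two_choose_two (t : ℕ) : 2 * ((t + 2).choose 2) = (t + 2) * (t + 1) := by
  rw [Nat.choose_two_right, show t + 2 - 1 = t + 1 from rfl]
  have h : Even ((t + 1) * (t + 2)) := Nat.even_mul_succ_self (t + 1)
  have h2 : (2 : ℕ) ∣ (t + 2) * (t + 1) := by rw [mul_comm]; exact h.two_dvd
  exact Nat.mul_div_cancel' h2

lemma choose_succ_self (t : ℕ) : (t + 2).choose (t + 1) = t + 2 := by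
  have := Nat.choose_symm (n := t + 2) (k := 1) (by omega)
  simpa [Nat.choose_one_right, show t + 2 - 1 = t + 1 from rfl] using this.symm

lemma choose_t (t : ℕ) : (t + 2).choose t = (t + 2).choose 2 := by
  have := Nat.choose_symm (n := t + 2) (k := 2) (by omega)
  simpa [show t + 2 - 2 = t from rfl] using this


/-- **Codegree squared sum of `A(n,k,t)`.** -/
theorem stmt_15 (t k n : ℕ) (ht : 0 < t) (htk : t ≤ k) (hkn : k ≤ n)
    (hn : t + 2 ≤ n) :
    (co2 n k (AK n k t) : ℤ) =
      (((t : ℤ) + 2) * ichoose ((n : ℤ) - t - 2) ((k : ℤ) - t - 2)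
          + ichoose ((n : ℤ) - t - 2) ((k : ℤ) - t - 3)) * ((n : ℤ) - k + 1) ^ 2
        + 2 * ((t : ℤ) + 2) * ((t : ℤ) + 1) * ichoose ((n : ℤ) - t - 2) ((k : ℤ) - t - 1) := by
  have hk : 0 < k := lt_of_lt_of_le ht htk
  have hcle : ∀ E ∈ KSets n (k - 1), (E ∩ Iv (t + 2)).card ≤ k - 1 := by
    intro E hE
    rw [mem_KSets] at hE
    exact le_trans (Finset.card_le_card Finset.inter_subset_left) (le_of_eq hE.2)
  have hcle2 : ∀ E : Finset ℕ, (E ∩ Iv (t + 2)).card ≤ t + 2 := by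
    intro E
    calc (E ∩ Iv (t + 2)).card ≤ (Iv (t + 2)).card :=
          Finset.card_le_card Finset.inter_subset_right
      _ = t + 2 := card_Iv _
  have hsum : co2 n k (AK n k t)
      = ((KSets n (k - 1)).filter fun E => t + 1 ≤ (E ∩ Iv (t + 2)).card).card * (n - k + 1) ^ 2
        + ((KSets n (k - 1)).filter fun E => (E ∩ Iv (t + 2)).card = t).card * 4 := by
    rw [co2]
    rw [Finset.sum_congr rfl (g := fun E =>
        if t + 1 ≤ (E ∩ Iv (t + 2)).card then (n - k + 1) ^ 2
        else if (E ∩ Iv (t + 2)).card = t then 4 else 0) (fun E hE => by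
      rw [mem_KSets] at hE
      rw [codeg_AK t k n hk hkn hn E hE.1 hE.2]
      by_cases h1 : t + 1 ≤ (E ∩ Iv (t + 2)).card
      · simp only [if_pos h1]
      · simp only [if_neg h1]
        by_cases h2 : (E ∩ Iv (t + 2)).card = t
        · simp only [if_pos h2]; norm_num
        · simp only [if_neg h2]; norm_num)]
    rw [Finset.sum_ite, Finset.sum_const, Finset.sum_ite, Finset.sum_const,
      Finset.sum_const_zero, add_zero, smul_eq_mul, smul_eq_mul, Finset.filter_filter]
    have hfe : ((KSets n (k - 1)).filter fun E =>
          ¬(t + 1 ≤ (E ∩ Iv (t + 2)).card) ∧ (E ∩ Iv (t + 2)).card = t)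
        = (KSets n (k - 1)).filter fun E => (E ∩ Iv (t + 2)).card = t := by
      apply Finset.filter_congr
      intro E _
      constructor
      · exact fun h => h.2
      · intro h; exact ⟨by omega, h⟩
    rw [hfe]
  rw [hsum]
  have hX : ((n - k : ℕ) : ℤ) = (n : ℤ) - k := by omega
  have h4 : 4 * ((t + 2).choose t) = 2 * ((t + 2) * (t + 1)) := by
    rw [choose_t, show 4 * ((t + 2).choose 2) = 2 * (2 * ((t + 2).choose 2)) from by ring,
      two_choose_two]
  by_cases hk1 : k = t
  · have hA : ((KSets n (k - 1)).filter fun E => t + 1 ≤ (E ∩ Iv (t + 2)).card) = ∅ := by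
      rw [Finset.filter_eq_empty_iff]
      intro E hE
      have := hcle E hE
      omega
    have hB : ((KSets n (k - 1)).filter fun E => (E ∩ Iv (t + 2)).card = t) = ∅ := by
      rw [Finset.filter_eq_empty_iff]
      intro E hE
      have := hcle E hE
      omega
    rw [hA, hB, ichoose_neg (show (k : ℤ) - t - 2 < 0 by omega),
      ichoose_neg (show (k : ℤ) - t - 3 < 0 by omega),
      ichoose_neg (show (k : ℤ) - t - 1 < 0 by omega)]
    simp
  · by_cases hk2 : k = t + 1
    · have hA : ((KSets n (k - 1)).filter fun E => t + 1 ≤ (E ∩ Iv (t + 2)).card) = ∅ := by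
        rw [Finset.filter_eq_empty_iff]
        intro E hE
        have := hcle E hE
        omega
      have hB := count_inter t (k - 1) n t hn (by omega)
      rw [hA, hB, show k - 1 - t = 0 from by omega, Nat.choose_zero_right,
        ichoose_neg (show (k : ℤ) - t - 2 < 0 by omega),
        ichoose_neg (show (k : ℤ) - t - 3 < 0 by omega),
        show (n : ℤ) - t - 2 = ((n - (t + 2) : ℕ) : ℤ) from by omega,
        show (k : ℤ) - t - 1 = ((0 : ℕ) : ℤ) from by omega, ichoose_natCast,
        Nat.choose_zero_right, Finset.card_empty]
      have h4' := h4
      zify at h4'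
      push_cast
      linarith
    · by_cases hk3 : k = t + 2
      · have hA : ((KSets n (k - 1)).filter fun E => t + 1 ≤ (E ∩ Iv (t + 2)).card)
            = (KSets n (k - 1)).filter fun E => (E ∩ Iv (t + 2)).card = t + 1 := by
          apply Finset.filter_congr
          intro E hE
          have := hcle E hE
          constructor
          · intro h; omega
          · intro h; omega
        have hB := count_inter t (k - 1) n (t + 1) hn (by omega)
        have hC := count_inter t (k - 1) n t hn (by omega)
        have h5 : ((t + 2).choose t * (n - (t + 2)).choose (k - 1 - t)) * 4
            = 2 * (t + 2) * (t + 1) * ((n - (t + 2)).choose (k - 1 - t)) := by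
          calc ((t + 2).choose t * (n - (t + 2)).choose (k - 1 - t)) * 4
              = (4 * ((t + 2).choose t)) * (n - (t + 2)).choose (k - 1 - t) := by ring
            _ = (2 * ((t + 2) * (t + 1))) * (n - (t + 2)).choose (k - 1 - t) := by rw [h4]
            _ = _ := by ring
        rw [hA, hB, hC, h5, choose_succ_self,
          show k - 1 - (t + 1) = 0 from by omega, Nat.choose_zero_right,
          ichoose_neg (show (k : ℤ) - t - 3 < 0 by omega),
          show (n : ℤ) - t - 2 = ((n - (t + 2) : ℕ) : ℤ) from by omega,
          show (k : ℤ) - t - 2 = ((0 : ℕ) : ℤ) from by omega,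
          show (k : ℤ) - t - 1 = ((k - 1 - t : ℕ) : ℤ) from by omega,
          ichoose_natCast, ichoose_natCast, Nat.choose_zero_right]
        push_cast
        rw [hX]
        ring
      · -- k ≥ t + 3
        have hk4 : t + 3 ≤ k := by omega
        have hdisj : Disjoint
            ((KSets n (k - 1)).filter fun E => (E ∩ Iv (t + 2)).card = t + 1)
            ((KSets n (k - 1)).filter fun E => (E ∩ Iv (t + 2)).card = t + 2) := by
          rw [Finset.disjoint_left]
          intro E h1 h2
          simp only [Finset.mem_filter] at h1 h2
          omega
        have hA : ((KSets n (k - 1)).filter fun E => t + 1 ≤ (E ∩ Iv (t + 2)).card)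
            = ((KSets n (k - 1)).filter fun E => (E ∩ Iv (t + 2)).card = t + 1)
              ∪ ((KSets n (k - 1)).filter fun E => (E ∩ Iv (t + 2)).card = t + 2) := by
          rw [← Finset.filter_or]
          apply Finset.filter_congr
          intro E _
          have := hcle2 E
          constructor
          · intro h; omega
          · intro h; omega
        have hB := count_inter t (k - 1) n (t + 1) hn (by omega)
        have hB2 := count_inter t (k - 1) n (t + 2) hn (by omega)
        have hC := count_inter t (k - 1) n t hn (by omega)
        have h5 : ((t + 2).choose t * (n - (t + 2)).choose (k - 1 - t)) * 4
            = 2 * (t + 2) * (t + 1) * ((n - (t + 2)).choose (k - 1 - t)) := by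
          calc ((t + 2).choose t * (n - (t + 2)).choose (k - 1 - t)) * 4
              = (4 * ((t + 2).choose t)) * (n - (t + 2)).choose (k - 1 - t) := by ring
            _ = (2 * ((t + 2) * (t + 1))) * (n - (t + 2)).choose (k - 1 - t) := by rw [h4]
            _ = _ := by ring
        rw [hA, Finset.card_union_of_disjoint hdisj, hB, hB2, hC, h5, choose_succ_self,
          Nat.choose_self, one_mul,
          show (n : ℤ) - t - 2 = ((n - (t + 2) : ℕ) : ℤ) from by omega,
          show (k : ℤ) - t - 2 = ((k - 1 - (t + 1) : ℕ) : ℤ) from by omega,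
          show (k : ℤ) - t - 3 = ((k - 1 - (t + 2) : ℕ) : ℤ) from by omega,
          show (k : ℤ) - t - 1 = ((k - 1 - t : ℕ) : ℤ) from by omega,
          ichoose_natCast, ichoose_natCast, ichoose_natCast]
        push_cast
        rw [hX]
        try ring
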